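/- (Continuity of the ψ-Riemann–Liouville fractional integral of a continuous function, asserted in the proof of Theorem 2.) Let g : [t₀, T] → ℝ be continuous. Then the function G : [t₀, T] → ℝ defined by G(t) = (1/Γ(α)) ∫_{t₀}^{t} ψ′(u)(ψ(t) − ψ(u))^{α−1} g(u) du (with G(t₀) = 0) is continuous on [t₀, T]. -/

import Mathlib

open Set intervalIntegral MeasureTheory Filter Topology

/-! The kernel `k τ u = ψ'(u) (ψ τ - ψ u)^(α-1)` has the continuous antiderivative
`u ↦ -(ψ τ - ψ u)^α / α`, with nonnegative derivative for `u < τ`; so `k τ` is integrable up to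
`τ` despite its singularity there, and its integrals are explicit. For `α ≤ 1` the kernel
decreases in `τ`, and splitting `G t' - G t` at `t` bounds it by `2 M (ψ t' - ψ t)^α / α`,
where `M` bounds `|g|`. Continuity of `ψ` then gives continuity of `G`. -/

theorem continuousOn_of_abs_sub_le_mul_rpow {f φ : ℝ → ℝ} {s : Set ℝ} {C α : ℝ} (hα : 0 < α)
    (hφ : ContinuousOn φ s)
    (h : ∀ x ∈ s, ∀ y ∈ s, x ≤ y → |f y - f x| ≤ C * |φ y - φ x| ^ α) :
    ContinuousOn f s := by
  intro x hx
  have hle : ∀ y ∈ s, |f y - f x| ≤ C * |φ y - φ x| ^ α := fun y hy => by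
    rcases le_total x y with hxy | hyx
    · exact h x hx y hy hxy
    · rw [abs_sub_comm (f y), abs_sub_comm (φ y)]
      exact h y hy x hx hyx
  have hlim : Tendsto (fun y => C * |φ y - φ x| ^ α) (𝓝[s] x) (𝓝 0) := by
    have hcont : ContinuousWithinAt (fun y => C * |φ y - φ x| ^ α) s x :=
      continuousWithinAt_const.mul
        (((hφ x hx).sub continuousWithinAt_const).abs.rpow_const (Or.inr hα.le))
    simpa [Real.zero_rpow hα.ne'] using hcont.tendsto
  exact tendsto_iff_norm_sub_tendsto_zero.2 <|
    squeeze_zero' (Eventually.of_forall fun _ => norm_nonneg _)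
      (eventually_nhdsWithin_of_forall hle) hlim

theorem abs_intervalIntegral_mul_le {f g : ℝ → ℝ} {a b M : ℝ} (hab : a ≤ b)
    (hf : IntervalIntegrable f volume a b) (hf₀ : ∀ u ∈ Ioo a b, 0 ≤ f u)
    (hg : ∀ u ∈ Icc a b, |g u| ≤ M) :
    |∫ u in a..b, f u * g u| ≤ M * ∫ u in a..b, f u := by
  rw [← Real.norm_eq_abs, ← intervalIntegral.integral_const_mul]
  refine norm_integral_le_of_norm_le hab ?_ (hf.const_mul M)
  filter_upwards [Ioo_ae_eq_Ioc.mem_iff] with u hu hu'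
  have hfu := hf₀ u (hu.2 hu')
  rw [Real.norm_eq_abs, abs_mul, abs_of_nonneg hfu, mul_comm M]
  exact mul_le_mul_of_nonneg_left (hg u (Ioc_subset_Icc_self hu')) hfu

noncomputable def psiRLKernel (ψ : ℝ → ℝ) (α τ u : ℝ) : ℝ :=
  deriv ψ u * (ψ τ - ψ u) ^ (α - 1)

section psiRLKernel

variable {ψ : ℝ → ℝ} {α τ τ' u a b : ℝ}

theorem psiRLKernel_nonneg (hψ : Monotone ψ) (hu : u ≤ τ) : 0 ≤ psiRLKernel ψ α τ u :=
  mul_nonneg hψ.deriv_nonneg (Real.rpow_nonneg (sub_nonneg.2 (hψ hu)) _)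

theorem psiRLKernel_le_of_le (hψ : StrictMono ψ) (hα : α ≤ 1) (hu : u < τ) (hτ : τ ≤ τ') :
    psiRLKernel ψ α τ' u ≤ psiRLKernel ψ α τ u :=
  mul_le_mul_of_nonneg_left
    (Real.rpow_le_rpow_of_nonpos (sub_pos.2 (hψ hu)) (by linarith [hψ.monotone hτ])
      (by linarith))
    hψ.monotone.deriv_nonneg

theorem hasDerivAt_neg_rpow_sub_div (hψ : DifferentiableAt ℝ ψ u) (hψu : ψ u < ψ τ)
    (hα : α ≠ 0) :
    HasDerivAt (fun v => -(ψ τ - ψ v) ^ α / α) (psiRLKernel ψ α τ u) u := by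
  refine (((hψ.hasDerivAt.const_sub (ψ τ)).rpow_const (p := α)
    (Or.inl (sub_pos.2 hψu).ne')).neg.div_const α).congr_deriv ?_
  rw [psiRLKernel]
  field_simp

theorem continuous_neg_rpow_sub_div (hψ : Continuous ψ) (hα : 0 < α) :
    Continuous (fun v => -(ψ τ - ψ v) ^ α / α) :=
  ((continuous_const.sub hψ).rpow_const fun _ => Or.inr hα.le).neg.div_const α

theorem intervalIntegrable_psiRLKernel (hψ : Differentiable ℝ ψ) (hmono : StrictMono ψ)
    (hα : 0 < α) (hab : a ≤ b) (hb : b ≤ τ) :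
    IntervalIntegrable (psiRLKernel ψ α τ) volume a b :=
  (intervalIntegrable_iff_integrableOn_Ioc_of_le hab).2 <|
    integrableOn_deriv_of_nonneg (continuous_neg_rpow_sub_div hψ.continuous hα).continuousOn
      (fun u hu => hasDerivAt_neg_rpow_sub_div (hψ u) (hmono (hu.2.trans_le hb)) hα.ne')
      (fun _ hu => psiRLKernel_nonneg hmono.monotone (hu.2.le.trans hb))

theorem integral_psiRLKernel (hψ : Differentiable ℝ ψ) (hmono : StrictMono ψ) (hα : 0 < α)
    (hab : a ≤ b) (hb : b ≤ τ) :
    ∫ u in a..b, psiRLKernel ψ α τ u = ((ψ τ - ψ a) ^ α - (ψ τ - ψ b) ^ α) / α := by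
  rw [integral_eq_sub_of_hasDerivAt_of_le hab
    (continuous_neg_rpow_sub_div hψ.continuous hα).continuousOn
    (fun u hu => hasDerivAt_neg_rpow_sub_div (hψ u) (hmono (hu.2.trans_le hb)) hα.ne')
    (intervalIntegrable_psiRLKernel hψ hmono hα hab hb)]
  ring

end psiRLKernel

section psiRLEstimates

variable {ψ g : ℝ → ℝ} {α t₀ t t' M : ℝ}

theorem abs_integral_psiRLKernel_mul_le (hψ : Differentiable ℝ ψ) (hmono : StrictMono ψ)
    (hα : 0 < α) (htt' : t ≤ t') (hg : ∀ u ∈ Icc t t', |g u| ≤ M) :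
    |∫ u in t..t', psiRLKernel ψ α t' u * g u| ≤ M * ((ψ t' - ψ t) ^ α / α) := by
  have h := abs_intervalIntegral_mul_le htt'
    (intervalIntegrable_psiRLKernel hψ hmono hα htt' le_rfl)
    (fun _ hu => psiRLKernel_nonneg hmono.monotone hu.2.le) hg
  rwa [integral_psiRLKernel hψ hmono hα htt' le_rfl, sub_self, Real.zero_rpow hα.ne',
    sub_zero] at h

theorem abs_integral_psiRLKernel_sub_mul_le (hψ : Differentiable ℝ ψ) (hmono : StrictMono ψ)
    (hα : 0 < α) (hα1 : α ≤ 1) (ht₀t : t₀ ≤ t) (htt' : t ≤ t')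
    (hg : ∀ u ∈ Icc t₀ t, |g u| ≤ M) :
    |∫ u in t₀..t, (psiRLKernel ψ α t u - psiRLKernel ψ α t' u) * g u|
      ≤ M * ((ψ t' - ψ t) ^ α / α) := by
  have hM : 0 ≤ M := (abs_nonneg _).trans (hg t₀ ⟨le_rfl, ht₀t⟩)
  have hK := intervalIntegrable_psiRLKernel hψ hmono hα ht₀t le_rfl
  have hK' := intervalIntegrable_psiRLKernel hψ hmono hα ht₀t htt'
  have hψ₀ : (ψ t - ψ t₀) ^ α ≤ (ψ t' - ψ t₀) ^ α :=
    Real.rpow_le_rpow (sub_nonneg.2 (hmono.monotone ht₀t))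
      (by linarith [hmono.monotone htt']) hα.le
  calc _ ≤ M * ∫ u in t₀..t, (psiRLKernel ψ α t u - psiRLKernel ψ α t' u) :=
        abs_intervalIntegral_mul_le ht₀t (hK.sub hK')
          (fun _ hu => sub_nonneg.2 (psiRLKernel_le_of_le hmono hα1 hu.2 htt')) hg
    _ = M * (((ψ t - ψ t₀) ^ α - (ψ t' - ψ t₀) ^ α + (ψ t' - ψ t) ^ α) / α) := by
        rw [integral_sub hK hK', integral_psiRLKernel hψ hmono hα ht₀t le_rfl,
          integral_psiRLKernel hψ hmono hα ht₀t htt', sub_self, Real.zero_rpow hα.ne']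
        ring
    _ ≤ M * ((ψ t' - ψ t) ^ α / α) := by gcongr; linarith

theorem abs_integral_psiRLKernel_mul_sub_le (hψ : Differentiable ℝ ψ) (hmono : StrictMono ψ)
    (hα : 0 < α) (hα1 : α ≤ 1) (ht₀t : t₀ ≤ t) (htt' : t ≤ t')
    (hg : ContinuousOn g (Icc t₀ t')) (hM : ∀ u ∈ Icc t₀ t', |g u| ≤ M) :
    |(∫ u in t₀..t', psiRLKernel ψ α t' u * g u) - ∫ u in t₀..t, psiRLKernel ψ α t u * g u|
      ≤ 2 * M / α * (ψ t' - ψ t) ^ α := by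
  have hint : ∀ {a b τ}, t₀ ≤ a → a ≤ b → b ≤ τ → τ ≤ t' →
      IntervalIntegrable (fun u => psiRLKernel ψ α τ u * g u) volume a b :=
    fun ha hab hb hτ => (intervalIntegrable_psiRLKernel hψ hmono hα hab hb).mul_continuousOn
      (hg.mono (uIcc_subset_Icc ⟨ha, hab.trans (hb.trans hτ)⟩ ⟨ha.trans hab, hb.trans hτ⟩))
  have hsplit : (∫ u in t₀..t', psiRLKernel ψ α t' u * g u)
      - ∫ u in t₀..t, psiRLKernel ψ α t u * g u
      = (∫ u in t..t', psiRLKernel ψ α t' u * g u)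
        - ∫ u in t₀..t, (psiRLKernel ψ α t u - psiRLKernel ψ α t' u) * g u := by
    simp only [sub_mul]
    rw [← integral_add_adjacent_intervals (hint le_rfl ht₀t htt' le_rfl)
      (hint ht₀t htt' le_rfl le_rfl),
      integral_sub (hint le_rfl ht₀t le_rfl htt') (hint le_rfl ht₀t htt' le_rfl)]
    ring
  have hg₁ : ∀ u ∈ Icc t t', |g u| ≤ M := fun u hu => hM u ⟨ht₀t.trans hu.1, hu.2⟩
  have hg₂ : ∀ u ∈ Icc t₀ t, |g u| ≤ M := fun u hu => hM u ⟨hu.1, hu.2.trans htt'⟩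
  rw [hsplit]
  calc _ ≤ M * ((ψ t' - ψ t) ^ α / α) + M * ((ψ t' - ψ t) ^ α / α) :=
        (abs_sub _ _).trans (add_le_add
          (abs_integral_psiRLKernel_mul_le hψ hmono hα htt' hg₁)
          (abs_integral_psiRLKernel_sub_mul_le hψ hmono hα hα1 ht₀t htt' hg₂))
    _ = 2 * M / α * (ψ t' - ψ t) ^ α := by ring

end psiRLEstimates

theorem psi_riemann_liouville_integral_continuousOn_general
    (t₀ T : ℝ) (α : ℝ) (hα0 : 0 < α) (hα1 : α ≤ 1)
    (ψ : ℝ → ℝ) (hψC : ContDiff ℝ 1 ψ) (hψmono : StrictMono ψ)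
    (g : ℝ → ℝ) (hg : ContinuousOn g (Icc t₀ T)) :
    ContinuousOn
      (fun t => (1 / Real.Gamma α) *
        ∫ u in t₀..t, deriv ψ u * (ψ t - ψ u) ^ (α - 1) * g u)
      (Icc t₀ T) := by
  have hψ : Differentiable ℝ ψ := hψC.differentiable one_ne_zero
  obtain ⟨M, hM⟩ := isCompact_Icc.exists_bound_of_continuousOn hg
  refine continuousOn_const.mul <| continuousOn_of_abs_sub_le_mul_rpow (C := 2 * M / α) hα0
    hψ.continuous.continuousOn fun t ht t' ht' htt' => ?_
  rw [abs_of_nonneg (sub_nonneg.2 (hψmono.monotone htt'))]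
  exact abs_integral_psiRLKernel_mul_sub_le hψ hψmono hα0 hα1 ht.1 htt'
    (hg.mono (Icc_subset_Icc_right ht'.2)) fun u hu => hM u (Icc_subset_Icc_right ht'.2 hu)

/-- Continuity of the ψ-Riemann–Liouville fractional integral of order `α` of a
continuous function (asserted in the proof of Theorem 2 of the paper). -/
theorem psi_riemann_liouville_integral_continuousOn
    (t₀ T : ℝ) (htT : t₀ < T) (α : ℝ) (hα0 : 0 < α) (hα1 : α ≤ 1)
    (ψ : ℝ → ℝ) (hψC : ContDiff ℝ 1 ψ) (hψmono : StrictMono ψ)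
    (hψ' : ∀ t ∈ Icc t₀ T, 0 < deriv ψ t)
    (g : ℝ → ℝ) (hg : ContinuousOn g (Icc t₀ T)) :
    ContinuousOn
      (fun t => (1 / Real.Gamma α) *
        ∫ u in t₀..t, deriv ψ u * (ψ t - ψ u) ^ (α - 1) * g u)
      (Icc t₀ T) :=
  psi_riemann_liouville_integral_continuousOn_general t₀ T α hα0 hα1 ψ hψC hψmono g hg
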